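/- Assume the following conjecture: for every natural number k ≥ 1, letting p₁ < p₂ < ⋯ < p_k denote the first k odd primes in succession, and for every even integer n with n > p_k, if none of n − p₁, …, n − p_k is prime, then there exists an index i with 1 ≤ i ≤ k and a prime p with p ≥ p_k such that p divides n − p_i. Then the following holds: for every natural number k ≥ 1, letting p₁ < ⋯ < p_k be the first k odd primes, and every even integer n with n > p_k, if none of n − p₁, …, n − p_k is prime, then there exists a prime p with p_k < p < n. -/
import Mathlib

/-- The `i`-th odd prime (1-indexed) is `Nat.nth Nat.Prime i`, since
`Nat.nth Nat.Prime 0 = 2`, `Nat.nth Nat.Prime 1 = 3`, etc.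

Assuming the paper's Conjecture 1, if none of `n - p₁, …, n - p_k` is prime
(for `n` even with `n > p_k`), then there is a prime `p` with `p_k < p < n`. -/
theorem lemma_one_of_conjecture
    (conj : ∀ k : ℕ, 1 ≤ k → ∀ n : ℕ, 2 ∣ n → Nat.nth Nat.Prime k < n →
      (∀ i : ℕ, 1 ≤ i → i ≤ k → ¬ Nat.Prime (n - Nat.nth Nat.Prime i)) →
      ∃ i : ℕ, 1 ≤ i ∧ i ≤ k ∧ ∃ p : ℕ, Nat.Prime p ∧ Nat.nth Nat.Prime k ≤ p ∧
        p ∣ (n - Nat.nth Nat.Prime i)) :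
    ∀ k : ℕ, 1 ≤ k → ∀ n : ℕ, 2 ∣ n → Nat.nth Nat.Prime k < n →
      (∀ i : ℕ, 1 ≤ i → i ≤ k → ¬ Nat.Prime (n - Nat.nth Nat.Prime i)) →
      ∃ p : ℕ, Nat.Prime p ∧ Nat.nth Nat.Prime k < p ∧ p < n := by
  intro k hk n hn hlt hnp
  obtain ⟨i, hi1, hik, p, hp, hpk, hpd⟩ := conj k hk n hn hlt hnp
  have hik' : Nat.nth Nat.Prime i ≤ Nat.nth Nat.Prime k :=
    (Nat.nth_le_nth Nat.infinite_setOf_prime).mpr hik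
  have hiprime : Nat.Prime (Nat.nth Nat.Prime i) :=
    Nat.nth_mem_of_infinite Nat.infinite_setOf_prime i
  have hipos : 0 < Nat.nth Nat.Prime i := hiprime.pos
  have hpos : 0 < n - Nat.nth Nat.Prime i := by omega
  have hne : p ≠ n - Nat.nth Nat.Prime i := by
    intro h; exact hnp i hi1 hik (h ▸ hp)
  have hple : p ≤ n - Nat.nth Nat.Prime i := Nat.le_of_dvd hpos hpd
  have hplt : p < n - Nat.nth Nat.Prime i := lt_of_le_of_ne hple hne
  rcases lt_or_eq_of_le hpk with h | h
  · exact ⟨p, hp, h, by omega⟩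
  · obtain ⟨m, hm⟩ := hpd
    have hm2 : 2 ≤ m := by
      rcases Nat.lt_or_ge m 2 with hlt2 | h2
      · interval_cases m
        · omega
        · refine absurd ?_ (hnp i hi1 hik)
          rw [hm, Nat.mul_one]; exact hp
      · exact h2
    have h2p : 2 * p ≤ n - Nat.nth Nat.Prime i := by
      calc 2 * p ≤ m * p := Nat.mul_le_mul_right p hm2
        _ = p * m := Nat.mul_comm m p
        _ = n - Nat.nth Nat.Prime i := hm.symm
    obtain ⟨q, hq, hq1, hq2⟩ := Nat.bertrand p hp.ne_zero
    exact ⟨q, hq, h ▸ hq1, by omega⟩
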